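/- arXiv:1501.01825 — 2 statements merged into one kernel-verified Lean document; each statement's English description precedes it below -/
import Mathlib

section
/- Let M be a compact metric space, Π_D a finite-dimensional linear space of continuous real functions on M with basis {P_k}_{k=1}^D, and x = Σ_m c_m δ_{t_m} a finite signed Dirac measure with distinct support T ⊂ M. Suppose that for every sign pattern u_m ∈ {-1,1} there exists q ∈ Π_D with q(t_m) = u_m for all t_m ∈ T and |q(t)| < 1 for all t ∈ M \ T. Then x is the unique signed Borel measure minimizing ‖x̃‖_TV over all signed Borel measures x̃ on M satisfying ∫ P_k dx̃ = ∫ P_k dx for all 1 ≤ k ≤ D. -/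
/-!
Let `q` be the certificate for the sign pattern of `c`. Since `|q| ≤ 1`, pairing any signed measure
with `q` is bounded by its total variation, while pairing with `x` gives exactly `∑ |c m|`; as the
pairing only depends on the measurements, every feasible `x'` has `‖x'‖ ≥ ∑ |c m| ≥ ‖x‖`. If
`‖x'‖ = ‖x‖`, equality in `∫ q dx' ≤ ‖x'‖` together with `|q| < 1` off `T` forces `x'` to live on `T`,
i.e. `x' = ∑ d m δ_{t m}`. Pairing with the certificates of all sign patterns `u` then gives
`∑ u m d m = ∑ u m c m`, and flipping a single sign isolates `d m = c m`.
-/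

open MeasureTheory

/-- Integral of a real function against a signed measure, via the Jordan decomposition. -/
noncomputable def sintegral {M : Type*} [MeasurableSpace M]
    (μ : SignedMeasure M) (f : M → ℝ) : ℝ :=
  (∫ x, f x ∂μ.toJordanDecomposition.posPart) - (∫ x, f x ∂μ.toJordanDecomposition.negPart)

open Set
open scoped NNReal ENNReal

lemma eq_of_forall_sign_sum_mul_eq {ι : Type*} [Fintype ι] {v w : ι → ℝ}
    (h : ∀ u : ι → ℝ, (∀ i, u i = 1 ∨ u i = -1) → ∑ i, u i * v i = ∑ i, u i * w i) :
    v = w := by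
  classical
  funext j
  let u : ι → ℝ := fun i => if i = j then -1 else 1
  have hu : ∀ i, u i = 1 ∨ u i = -1 := fun i => by by_cases hi : i = j <;> simp [u, hi]
  have flip : ∀ g : ι → ℝ, ∑ i, (1 : ℝ) * g i - ∑ i, u i * g i = 2 * g j := fun g => by
    rw [← Finset.sum_sub_distrib, Fintype.sum_eq_single j fun i hi => by simp [u, hi]]
    simp only [u, if_pos rfl]
    ring
  have := h 1 fun _ => Or.inl rfl
  simp only [Pi.one_apply] at this
  linarith [flip v, flip w, h u hu]

lemma abs_le_one_of_eq_sign_on_range {M ι : Type*} {t : ι → M} {u : ι → ℝ}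
    (hu : ∀ i, u i = 1 ∨ u i = -1) {q : M → ℝ} (hq_t : ∀ i, q (t i) = u i)
    (hq_off : ∀ x ∉ range t, |q x| < 1) (x : M) : |q x| ≤ 1 := by
  by_cases hx : x ∈ range t
  · obtain ⟨i, rfl⟩ := hx
    rcases hu i with h | h <;> simp [hq_t, h]
  · exact (hq_off x hx).le

section Integrals

variable {M : Type*} [MeasurableSpace M] (μ : Measure M) [IsFiniteMeasure μ] {f : M → ℝ}

lemma integral_le_measureReal_univ (hf : Integrable f μ) (hf1 : ∀ x, f x ≤ 1) :
    ∫ x, f x ∂μ ≤ μ.real univ := by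
  simpa using integral_mono hf (integrable_const 1) hf1

lemma ae_eq_one_of_integral_eq_measureReal_univ (hf : Integrable f μ) (hf1 : ∀ x, f x ≤ 1)
    (h : ∫ x, f x ∂μ = μ.real univ) : f =ᵐ[μ] 1 :=
  (integral_eq_iff_of_ae_le hf (integrable_const 1) (.of_forall hf1)).1 (by simpa using h)

end Integrals

section DiracEnsembles

variable {M : Type*} [MeasurableSpace M] {ι : Type*} [Fintype ι]

lemma sum_smul_toSignedMeasure_dirac_eq_sub (c : ι → ℝ) (t : ι → M) :
    ∑ i, c i • (Measure.dirac (t i)).toSignedMeasure =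
      (∑ i, (c i).toNNReal • Measure.dirac (t i)).toSignedMeasure -
        (∑ i, (-c i).toNNReal • Measure.dirac (t i)).toSignedMeasure := by
  ext E hE
  have hfin : ∀ (r : ℝ≥0) i, r • E.indicator 1 (t i) ≠ ∞ := fun r i => by
    by_cases h : t i ∈ E <;> simp [h, ENNReal.smul_def]
  simp [Measure.toSignedMeasure_apply_measurable hE, measureReal_def, hE]
  rw [ENNReal.toReal_sum fun i _ => hfin _ i, ENNReal.toReal_sum fun i _ => hfin _ i,
    ← Finset.sum_sub_distrib]
  refine Finset.sum_congr rfl fun i _ => ?_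
  by_cases h : t i ∈ E <;> simp [h]

lemma totalVariation_sum_smul_dirac_le (c : ι → ℝ) (t : ι → M) :
    (∑ i, c i • (Measure.dirac (t i)).toSignedMeasure).totalVariation univ ≤
      ENNReal.ofReal (∑ i, |c i|) := by
  rw [SignedMeasure.totalVariation_eq_variation,
    ENNReal.ofReal_sum_of_nonneg fun i _ => abs_nonneg _]
  refine (VectorMeasure.variation_finsetSum_le _ _ univ).trans_eq ?_
  simp [VectorMeasure.variation_smul, ← enorm_eq_nnnorm, Real.enorm_eq_ofReal_abs]

lemma MeasureTheory.SignedMeasure.eq_sum_smul_dirac_of_totalVariation_compl_eq_zero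
    [MeasurableSingletonClass M] (y : SignedMeasure M) {t : ι → M}
    (ht : Function.Injective t) (hy : y.totalVariation (range t)ᶜ = 0) :
    y = ∑ i, y {t i} • (Measure.dirac (t i)).toSignedMeasure := by
  classical
  ext E hE
  have hT : MeasurableSet (range t) := (finite_range t).measurableSet
  have hout : y (E \ range t) = 0 :=
    y.null_of_totalVariation_zero (measure_mono_null (sdiff_subset_compl _ _) hy)
  have hin : E ∩ range t = ⋃ i ∈ Finset.univ.filter (t · ∈ E), {t i} := by
    ext; aesop
  have hsplit : y E = y (E ∩ range t) + y (E \ range t) := by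
    rw [← VectorMeasure.of_union (disjoint_sdiff_right.mono_left inter_subset_right)
      (hE.inter hT) (hE.diff hT), inter_union_sdiff]
  rw [hsplit, hout, add_zero, hin,
    VectorMeasure.of_biUnion_finset (fun i _ j _ hij => by simpa using ht.ne hij)
      (fun _ _ => measurableSet_singleton _), Finset.sum_filter, _root_.sum_apply]
  refine Finset.sum_congr rfl fun i _ => ?_
  by_cases h : t i ∈ E <;>
    simp [Measure.toSignedMeasure_apply_measurable hE, measureReal_def, hE, h]

end DiracEnsembles

section CompactSpace

variable {M : Type*} [TopologicalSpace M] [CompactSpace M] [MeasurableSpace M]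
  [OpensMeasurableSpace M]

lemma Continuous.integrable_of_compactSpace {f : M → ℝ} (hf : Continuous f) (μ : Measure M)
    [IsFiniteMeasure μ] : Integrable f μ :=
  hf.integrable_of_hasCompactSupport (HasCompactSupport.of_compactSpace f)

lemma sintegral_toSignedMeasure_sub (p n : Measure M) [IsFiniteMeasure p] [IsFiniteMeasure n]
    {f : M → ℝ} (hf : Continuous f) :
    sintegral (p.toSignedMeasure - n.toSignedMeasure) f = ∫ x, f x ∂p - ∫ x, f x ∂n := by
  set J := (p.toSignedMeasure - n.toSignedMeasure).toJordanDecomposition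
  have hJ : J.posPart + n = p + J.negPart := by
    rw [← Measure.toSignedMeasure_eq_toSignedMeasure_iff, Measure.toSignedMeasure_add,
      Measure.toSignedMeasure_add, ← sub_eq_sub_iff_add_eq_add]
    exact SignedMeasure.toSignedMeasure_toJordanDecomposition _
  have := congrArg (fun μ : Measure M => ∫ x, f x ∂μ) hJ
  simp only [integral_add_measure (hf.integrable_of_compactSpace _)
    (hf.integrable_of_compactSpace _)] at this
  simp only [sintegral, J] at *
  linarith

lemma sintegral_sum_mul {ι : Type*} [Fintype ι] (y : SignedMeasure M) (a : ι → ℝ)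
    {f : ι → M → ℝ} (hf : ∀ i, Continuous (f i)) :
    sintegral y (fun x => ∑ i, a i * f i x) = ∑ i, a i * sintegral y (f i) := by
  have hμ : ∀ (μ : Measure M) [IsFiniteMeasure μ],
      ∫ x, ∑ i, a i * f i x ∂μ = ∑ i, a i * ∫ x, f i x ∂μ := fun μ _ => by
    rw [integral_finsetSum _ fun i _ => ((hf i).integrable_of_compactSpace μ).const_mul (a i)]
    simp only [integral_const_mul]
  simp only [sintegral, hμ, ← Finset.sum_sub_distrib, mul_sub]

lemma sintegral_sum_smul_dirac {ι : Type*} [Fintype ι] (c : ι → ℝ) (t : ι → M) {f : M → ℝ}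
    (hf : Continuous f) :
    sintegral (∑ i, c i • (Measure.dirac (t i)).toSignedMeasure) f = ∑ i, c i * f (t i) := by
  rw [sum_smul_toSignedMeasure_dirac_eq_sub, sintegral_toSignedMeasure_sub _ _ hf,
    integral_finsetSum_measure fun i _ => hf.integrable_of_compactSpace _,
    integral_finsetSum_measure fun i _ => hf.integrable_of_compactSpace _,
    ← Finset.sum_sub_distrib]
  refine Finset.sum_congr rfl fun i _ => ?_
  simp [integral_smul_nnreal_measure, integral_dirac' _ _ hf.stronglyMeasurable, NNReal.smul_def,
    ← sub_mul]

variable (y : SignedMeasure M) {q : M → ℝ} (hq : Continuous q) (hq1 : ∀ x, |q x| ≤ 1)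
include hq hq1

lemma sintegral_le_totalVariation : sintegral y q ≤ y.totalVariation.real univ := by
  have hP := integral_le_measureReal_univ y.toJordanDecomposition.posPart
    (hq.integrable_of_compactSpace _) fun x => (abs_le.1 (hq1 x)).2
  have hN := integral_le_measureReal_univ y.toJordanDecomposition.negPart (f := fun x => -q x)
    (hq.neg.integrable_of_compactSpace _) fun x => neg_le.2 (abs_le.1 (hq1 x)).1
  rw [integral_neg] at hN
  rw [SignedMeasure.totalVariation, measureReal_add_apply]
  unfold sintegral
  linarith

lemma totalVariation_compl_eq_zero_of_sintegral_eq {S : Set M} (hS : ∀ x ∉ S, |q x| < 1)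
    (h : sintegral y q = y.totalVariation.real univ) : y.totalVariation Sᶜ = 0 := by
  set P := y.toJordanDecomposition.posPart
  set N := y.toJordanDecomposition.negPart
  have hqP : Integrable q P := hq.integrable_of_compactSpace _
  have hqN : Integrable (fun x => -q x) N := hq.neg.integrable_of_compactSpace _
  have hP := integral_le_measureReal_univ P hqP fun x => (abs_le.1 (hq1 x)).2
  have hN := integral_le_measureReal_univ N hqN fun x => neg_le.2 (abs_le.1 (hq1 x)).1
  rw [integral_neg] at hN
  rw [SignedMeasure.totalVariation, measureReal_add_apply] at h
  unfold sintegral at h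
  have hP1 : q =ᵐ[P] 1 := ae_eq_one_of_integral_eq_measureReal_univ P hqP
    (fun x => (abs_le.1 (hq1 x)).2) (by linarith)
  have hN1 : (fun x => -q x) =ᵐ[N] 1 := ae_eq_one_of_integral_eq_measureReal_univ N hqN
    (fun x => neg_le.2 (abs_le.1 (hq1 x)).1) (by rw [integral_neg]; linarith)
  rw [SignedMeasure.totalVariation, Measure.add_apply, add_eq_zero]
  exact ⟨measure_mono_null (fun x hx => (abs_lt.1 (hS x hx)).2.ne) (ae_iff.1 hP1),
    measure_mono_null (fun x hx => by simpa [neg_eq_iff_eq_neg] using (abs_lt.1 (hS x hx)).1.ne')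
      (ae_iff.1 hN1)⟩

end CompactSpace

theorem tv_min_unique_of_dual_certificate_general
    {M : Type*} [MetricSpace M] [CompactSpace M] [MeasurableSpace M] [BorelSpace M]
    {D s : ℕ} (P : Fin D → C(M, ℝ))
    (t : Fin s → M) (c : Fin s → ℝ)
    (ht : Function.Injective t)
    (x : SignedMeasure M)
    (hx : x = ∑ m : Fin s, c m • (Measure.dirac (t m)).toSignedMeasure)
    (hcert : ∀ u : Fin s → ℝ, (∀ m, u m = 1 ∨ u m = -1) →
      ∃ a : Fin D → ℝ,
        (∀ m, (∑ k : Fin D, a k * P k (t m)) = u m) ∧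
        (∀ τ : M, τ ∉ Set.range t → |∑ k : Fin D, a k * P k τ| < 1)) :
    ∀ x' : SignedMeasure M,
      (∀ k : Fin D, sintegral x' (P k) = sintegral x (P k)) →
      (x.totalVariation Set.univ ≤ x'.totalVariation Set.univ ∧
        (x'.totalVariation Set.univ = x.totalVariation Set.univ → x' = x)) := by
  intro x' hx'
  have hP : ∀ k, Continuous (P k) := fun k => (P k).continuous
  have hmeas (b : Fin D → ℝ) :
      sintegral x' (fun τ => ∑ k, b k * P k τ) = sintegral x (fun τ => ∑ k, b k * P k τ) := by
    simp only [sintegral_sum_mul _ _ hP, hx']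
  let sgn : Fin s → ℝ := fun m => if 0 ≤ c m then 1 else -1
  have hsgn (m : Fin s) : sgn m = 1 ∨ sgn m = -1 := by by_cases h : 0 ≤ c m <;> simp [sgn, h]
  obtain ⟨a, ha_t, ha_off⟩ := hcert sgn hsgn
  have hq : Continuous fun τ => ∑ k, a k * P k τ := by fun_prop
  have hq1 : ∀ τ, |∑ k, a k * P k τ| ≤ 1 :=
    abs_le_one_of_eq_sign_on_range (q := fun τ => ∑ k, a k * P k τ) hsgn ha_t ha_off
  have hx'q : sintegral x' (fun τ => ∑ k, a k * P k τ) = ∑ m, |c m| := by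
    rw [hmeas, hx, sintegral_sum_smul_dirac _ _ hq]
    refine Finset.sum_congr rfl fun m _ => ?_
    by_cases h : 0 ≤ c m <;> simp [ha_t, sgn, h, abs_of_nonneg, abs_of_neg (not_le.1 h)]
  have hx_le : x.totalVariation univ ≤ ENNReal.ofReal (∑ m, |c m|) :=
    hx ▸ totalVariation_sum_smul_dirac_le c t
  have hle_x' : ENNReal.ofReal (∑ m, |c m|) ≤ x'.totalVariation univ :=
    ENNReal.ofReal_le_of_le_toReal (hx'q ▸ sintegral_le_totalVariation x' hq hq1)
  refine ⟨hx_le.trans hle_x', fun heq => ?_⟩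
  have hconc : x'.totalVariation (range t)ᶜ = 0 := by
    refine totalVariation_compl_eq_zero_of_sintegral_eq x' hq hq1 ha_off
      (le_antisymm (sintegral_le_totalVariation x' hq hq1) ?_)
    rw [hx'q, measureReal_def]
    exact ENNReal.toReal_le_of_le_ofReal (by positivity) (heq ▸ hx_le)
  obtain ⟨d, rfl⟩ : ∃ d : Fin s → ℝ, x' = ∑ m, d m • (Measure.dirac (t m)).toSignedMeasure :=
    ⟨_, x'.eq_sum_smul_dirac_of_totalVariation_compl_eq_zero ht hconc⟩
  suffices d = c by rw [hx, this]
  refine eq_of_forall_sign_sum_mul_eq fun u hu => ?_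
  obtain ⟨b, hb_t, -⟩ := hcert u hu
  have := hmeas b
  rw [hx, sintegral_sum_smul_dirac _ _ (by fun_prop), sintegral_sum_smul_dirac _ _ (by fun_prop)]
    at this
  simpa [hb_t, mul_comm] using this

/-- Theorem 1: if for every sign pattern there is a dual certificate
`q ∈ Π_D = span{P_k}` interpolating the signs on `T` and with `|q| < 1` off `T`, then the
Dirac ensemble `x` is the unique TV-minimizer among signed measures matching the
measurements `⟨·, P_k⟩`. -/
theorem tv_min_unique_of_dual_certificate
    {M : Type*} [MetricSpace M] [CompactSpace M] [MeasurableSpace M] [BorelSpace M]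
    {D s : ℕ} (P : Fin D → C(M, ℝ))
    (t : Fin s → M) (c : Fin s → ℝ)
    (ht : Function.Injective t) (hc : ∀ m, c m ≠ 0)
    (x : SignedMeasure M)
    (hx : x = ∑ m : Fin s, c m • (Measure.dirac (t m)).toSignedMeasure)
    (hcert : ∀ u : Fin s → ℝ, (∀ m, u m = 1 ∨ u m = -1) →
      ∃ a : Fin D → ℝ,
        (∀ m, (∑ k : Fin D, a k * P k (t m)) = u m) ∧
        (∀ τ : M, τ ∉ Set.range t → |∑ k : Fin D, a k * P k τ| < 1)) :
    ∀ x' : SignedMeasure M,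
      (∀ k : Fin D, sintegral x' (P k) = sintegral x (P k)) →
      (x.totalVariation Set.univ ≤ x'.totalVariation Set.univ ∧
        (x'.totalVariation Set.univ = x.totalVariation Set.univ → x' = x)) :=
  tv_min_unique_of_dual_certificate_general P t c ht x hx hcert
end

section
/- Combining the non-negative dual certificate criterion with the explicit product construction: any Dirac ensemble x = Σ_{m=1}^s c_m δ_{t_m} on the circle ℝ/2πℤ with all c_m > 0, distinct t_m, and s ≤ N is the unique signed Borel measure minimizing TV norm subject to matching the Fourier coefficients ⟨x̃, e^{ikt}⟩ for |k| ≤ N. -/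
/-!
Write `e(y) = fourier 1 y`. Since `x ≥ 0`, its total variation is its mass `x(𝕋)`, which is the
zeroth Fourier coefficient and hence equals `x̃(𝕋) ≤ ‖x̃‖`. If equality holds, `x̃` is a positive
measure with the same Fourier coefficients as `x` up to order `N`. The trigonometric polynomial
`q(y) = ∏ₘ |e(y) - e(tₘ)|²` has degree `s ≤ N`, is nonnegative and vanishes exactly on `{tₘ}`;
since `∫ q dx̃ = ∫ q dx = 0`, the measure `x̃` is carried by `{tₘ}`. Its weights are then read off
by integrating `∏_{j ≠ m} |e(y) - e(tⱼ)|²`, which vanishes at every `tⱼ` except `tₘ`.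
-/

open MeasureTheory Real

/-- Integral of a complex function against a signed measure, via the Jordan decomposition. -/
noncomputable def csintegral {M : Type*} [MeasurableSpace M]
    (μ : SignedMeasure M) (f : M → ℂ) : ℂ :=
  (∫ x, f x ∂μ.toJordanDecomposition.posPart) - (∫ x, f x ∂μ.toJordanDecomposition.negPart)

open scoped ComplexConjugate

namespace MeasureTheory

variable {M : Type*} [MeasurableSpace M]

theorem Measure.toSignedMeasure_toJordanDecomposition (μ : Measure M) [IsFiniteMeasure μ] :
    μ.toSignedMeasure.toJordanDecomposition = ⟨μ, 0, .zero_right⟩ := by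
  simpa [JordanDecomposition.toSignedMeasure] using
    JordanDecomposition.toJordanDecomposition_toSignedMeasure ⟨μ, 0, .zero_right⟩

theorem Measure.totalVariation_toSignedMeasure (μ : Measure M) [IsFiniteMeasure μ] :
    μ.toSignedMeasure.totalVariation = μ := by
  simp [SignedMeasure.totalVariation, μ.toSignedMeasure_toJordanDecomposition]

theorem Measure.toSignedMeasure_finsetSum {ι : Type*} (S : Finset ι) (μ : ι → Measure M)
    [∀ i, IsFiniteMeasure (μ i)] :
    (∑ i ∈ S, μ i).toSignedMeasure = ∑ i ∈ S, (μ i).toSignedMeasure := by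
  classical
  induction S using Finset.induction_on with
  | empty => simp
  | insert i S hi ih =>
    simp only [Finset.sum_insert hi, Measure.toSignedMeasure_add, ih]

namespace SignedMeasure

theorem eq_toSignedMeasure_posPart_of_totalVariation_le (s : SignedMeasure M)
    (hs : s.totalVariation Set.univ ≤ ENNReal.ofReal (s Set.univ)) :
    s = s.toJordanDecomposition.posPart.toSignedMeasure := by
  set p := s.toJordanDecomposition.posPart
  set n := s.toJordanDecomposition.negPart
  have hpn : p Set.univ + n Set.univ ≤ p Set.univ + 0 := calc
    p Set.univ + n Set.univ = s.totalVariation Set.univ := rfl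
    _ ≤ ENNReal.ofReal (p.real Set.univ - n.real Set.univ) := by
      rwa [s.apply_eq_posPart_real_sub_negPart_real MeasurableSet.univ] at hs
    _ ≤ ENNReal.ofReal (p.real Set.univ) := by gcongr; exact sub_le_self _ measureReal_nonneg
    _ = p Set.univ + 0 := by rw [ofReal_measureReal, add_zero]
  have hn : s.toJordanDecomposition.negPart = 0 :=
    Measure.measure_univ_eq_zero.1 (nonpos_iff_eq_zero.1 (ENNReal.le_of_add_le_add_left
      (measure_ne_top _ _) hpn))
  conv_lhs => rw [← s.toSignedMeasure_toJordanDecomposition]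
  simp [JordanDecomposition.toSignedMeasure, hn]

end SignedMeasure

theorem integral_eq_sum_of_ae_mem_finset [MeasurableSingletonClass M] {E : Type*}
    [NormedAddCommGroup E] [NormedSpace ℝ E] [CompleteSpace E] {μ : Measure M} [IsFiniteMeasure μ]
    {S : Finset M}
    (hμ : ∀ᵐ y ∂μ, y ∈ S) (f : M → E) : ∫ y, f y ∂μ = ∑ a ∈ S, μ.real {a} • f a := by
  rw [Measure.ae_mem_finset_iff] at hμ
  conv_lhs => rw [hμ]
  rw [integral_finsetSum_measure fun a _ =>
    (integrable_dirac (by simp)).smul_measure (measure_ne_top _ _)]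
  simp [integral_smul_measure, integral_dirac, measureReal_def]

end MeasureTheory

section csintegral

variable {M : Type*} [MeasurableSpace M]

theorem csintegral_toSignedMeasure (μ : Measure M) [IsFiniteMeasure μ] (f : M → ℂ) :
    csintegral μ.toSignedMeasure f = ∫ y, f y ∂μ := by
  simp [csintegral, μ.toSignedMeasure_toJordanDecomposition]

theorem csintegral_one (s : SignedMeasure M) : csintegral s 1 = s Set.univ := by
  simp [csintegral, s.apply_eq_posPart_real_sub_negPart_real MeasurableSet.univ]

end csintegral

namespace AddCircle

variable {T : ℝ}

variable (T) in
noncomputable def trigPolynomials (n : ℕ) : Submodule ℂ C(AddCircle T, ℂ) :=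
  Submodule.span ℂ (fourier '' {k | |k| ≤ (n : ℤ)})

theorem fourier_mem_trigPolynomials {n : ℕ} {k : ℤ} (hk : |k| ≤ n) :
    fourier k ∈ trigPolynomials T n :=
  Submodule.subset_span ⟨k, hk, rfl⟩

theorem trigPolynomials_mono {m n : ℕ} (h : m ≤ n) : trigPolynomials T m ≤ trigPolynomials T n :=
  Submodule.span_mono <| Set.image_mono fun _ (hk : |_| ≤ _) => hk.trans (Int.ofNat_le.2 h)

theorem mul_mem_trigPolynomials {m n : ℕ} {f g : C(AddCircle T, ℂ)}
    (hf : f ∈ trigPolynomials T m) (hg : g ∈ trigPolynomials T n) :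
    f * g ∈ trigPolynomials T (m + n) := by
  have hfg := Submodule.mul_mem_mul hf hg
  rw [trigPolynomials, trigPolynomials, Submodule.span_mul_span] at hfg
  refine Submodule.span_mono ?_ hfg
  rintro _ ⟨_, ⟨k, hk, rfl⟩, _, ⟨l, hl, rfl⟩, rfl⟩
  refine ⟨k + l, ?_, ContinuousMap.ext fun y => fourier_add⟩
  push_cast
  exact (abs_add_le k l).trans (add_le_add hk hl)

theorem prod_mem_trigPolynomials {ι : Type*} (S : Finset ι) {f : ι → C(AddCircle T, ℂ)}
    (hf : ∀ i ∈ S, f i ∈ trigPolynomials T 1) : ∏ i ∈ S, f i ∈ trigPolynomials T S.card := by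
  classical
  induction S using Finset.induction_on with
  | empty =>
    have h1 : (1 : C(AddCircle T, ℂ)) = fourier 0 := by ext; simp
    simpa [h1] using fourier_mem_trigPolynomials (T := T) (n := 0) (k := 0) le_rfl
  | insert i S hi ih =>
    rw [Finset.prod_insert hi, Finset.card_insert_of_notMem hi, add_comm]
    exact mul_mem_trigPolynomials (hf i (S.mem_insert_self i))
      (ih fun j hj => hf j (Finset.mem_insert_of_mem hj))

theorem integral_eq_of_mem_trigPolynomials [Fact (0 < T)] {μ ν : Measure (AddCircle T)}
    [IsFiniteMeasure μ] [IsFiniteMeasure ν] {n : ℕ}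
    (h : ∀ k : ℤ, |k| ≤ n → ∫ y, fourier k y ∂μ = ∫ y, fourier k y ∂ν)
    {f : C(AddCircle T, ℂ)} (hf : f ∈ trigPolynomials T n) : ∫ y, f y ∂μ = ∫ y, f y ∂ν := by
  have hint (ρ : Measure (AddCircle T)) [IsFiniteMeasure ρ] (g : C(AddCircle T, ℂ)) :
      Integrable g ρ :=
    g.continuous.integrable_of_hasCompactSupport (HasCompactSupport.of_compactSpace g)
  induction hf using Submodule.span_induction with
  | mem f hf => obtain ⟨k, hk, rfl⟩ := hf; exact h k hk
  | zero => simp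
  | add f g _ _ hf hg =>
    simp only [ContinuousMap.coe_add, Pi.add_apply]
    rw [integral_add (hint μ f) (hint μ g), integral_add (hint ν f) (hint ν g), hf, hg]
  | smul a f _ hf => simp only [ContinuousMap.coe_smul, Pi.smul_apply, integral_smul, hf]

noncomputable def chordSq (a : AddCircle T) : C(AddCircle T, ℂ) where
  toFun y := ((‖fourier 1 y - fourier 1 a‖ ^ 2 : ℝ) : ℂ)
  continuous_toFun := by fun_prop

theorem chordSq_eq (a : AddCircle T) :
    chordSq a =
      (2 : ℂ) • fourier 0 - conj (fourier 1 a) • fourier 1 - fourier 1 a • fourier (-1) := by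
  ext y
  have hunit (z : AddCircle T) : fourier 1 z * conj (fourier 1 z) = 1 := by
    rw [Complex.mul_conj, Complex.normSq_eq_norm_sq, fourier_one, Circle.norm_coe]
    norm_num
  simp only [chordSq, ContinuousMap.coe_mk, ContinuousMap.sub_apply, ContinuousMap.smul_apply,
    smul_eq_mul, fourier_zero, fourier_neg]
  rw [← Complex.normSq_eq_norm_sq, ← Complex.mul_conj, map_sub]
  linear_combination hunit y + hunit a

theorem chordSq_mem_trigPolynomials (a : AddCircle T) : chordSq a ∈ trigPolynomials T 1 := by
  rw [chordSq_eq]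
  refine sub_mem (sub_mem ?_ ?_) ?_ <;>
    exact Submodule.smul_mem _ _ (fourier_mem_trigPolynomials (by norm_num))

theorem chordSq_apply_eq_zero_iff [Fact (0 < T)] {a y : AddCircle T} :
    chordSq a y = 0 ↔ y = a := by
  simp only [chordSq, ContinuousMap.coe_mk, Complex.ofReal_eq_zero, ne_eq, OfNat.ofNat_ne_zero,
    not_false_eq_true, pow_eq_zero_iff, norm_eq_zero, sub_eq_zero, fourier_one]
  exact ⟨fun h => injective_toCircle (Fact.out : 0 < T).ne' (Circle.coe_injective h),
    fun h => h ▸ rfl⟩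

theorem prod_chordSq_apply (S : Finset (AddCircle T)) (y : AddCircle T) :
    (∏ a ∈ S, chordSq a) y = ((∏ a ∈ S, ‖fourier 1 y - fourier 1 a‖ ^ 2 : ℝ) : ℂ) := by
  simp [ContinuousMap.prod_apply, chordSq]

theorem prod_chordSq_apply_eq_zero_iff [Fact (0 < T)] {S : Finset (AddCircle T)}
    {y : AddCircle T} : (∏ a ∈ S, chordSq a) y = 0 ↔ y ∈ S := by
  simp [ContinuousMap.prod_apply, Finset.prod_eq_zero_iff, chordSq_apply_eq_zero_iff]

theorem ae_mem_of_integral_prod_chordSq_eq_zero [Fact (0 < T)] {μ : Measure (AddCircle T)}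
    [IsFiniteMeasure μ] {S : Finset (AddCircle T)}
    (h : ∫ y, (∏ a ∈ S, chordSq a) y ∂μ = 0) : ∀ᵐ y ∂μ, y ∈ S := by
  simp_rw [prod_chordSq_apply, integral_complex_ofReal, Complex.ofReal_eq_zero] at h
  have hcont : Continuous fun y : AddCircle T => ∏ a ∈ S, ‖fourier 1 y - fourier 1 a‖ ^ 2 := by
    fun_prop
  have hzero := (integral_eq_zero_iff_of_nonneg (fun y => by positivity)
    (hcont.integrable_of_hasCompactSupport (.of_compactSpace _))).1 h
  filter_upwards [hzero] with y hy
  rw [← prod_chordSq_apply_eq_zero_iff, prod_chordSq_apply]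
  exact_mod_cast hy

theorem ae_mem_of_integral_trigPolynomials_eq [Fact (0 < T)] {μ ν : Measure (AddCircle T)}
    [IsFiniteMeasure μ] {S : Finset (AddCircle T)} {N : ℕ} (hS : S.card ≤ N)
    (hν : ∀ᵐ y ∂ν, y ∈ S) (h : ∀ f ∈ trigPolynomials T N, ∫ y, f y ∂μ = ∫ y, f y ∂ν) :
    ∀ᵐ y ∂μ, y ∈ S := by
  have hq : ∏ a ∈ S, chordSq a ∈ trigPolynomials T N :=
    trigPolynomials_mono hS (prod_mem_trigPolynomials S fun a _ => chordSq_mem_trigPolynomials a)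
  refine ae_mem_of_integral_prod_chordSq_eq_zero ?_
  rw [h _ hq]
  exact integral_eq_zero_of_ae (hν.mono fun y hy => prod_chordSq_apply_eq_zero_iff.2 hy)

theorem eq_of_integral_trigPolynomials_eq [Fact (0 < T)] {μ ν : Measure (AddCircle T)}
    [IsFiniteMeasure μ] [IsFiniteMeasure ν] {S : Finset (AddCircle T)} {N : ℕ}
    (hS : S.card ≤ N + 1) (hμ : ∀ᵐ y ∂μ, y ∈ S) (hν : ∀ᵐ y ∂ν, y ∈ S)
    (h : ∀ f ∈ trigPolynomials T N, ∫ y, f y ∂μ = ∫ y, f y ∂ν) : μ = ν := by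
  have hweight : ∀ a ∈ S, μ {a} = ν {a} := by
    intro a ha
    let q := ∏ b ∈ S.erase a, chordSq b
    have hq : q ∈ trigPolynomials T N := by
      refine trigPolynomials_mono ?_
        (prod_mem_trigPolynomials _ fun b _ => chordSq_mem_trigPolynomials b)
      rw [Finset.card_erase_of_mem ha]
      omega
    have hqa : q a ≠ 0 := by rw [Ne, prod_chordSq_apply_eq_zero_iff]; simp
    have hint (ρ : Measure (AddCircle T)) [IsFiniteMeasure ρ] (hρ : ∀ᵐ y ∂ρ, y ∈ S) :
        ∫ y, q y ∂ρ = ρ.real {a} • q a := by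
      rw [integral_eq_sum_of_ae_mem_finset hρ, Finset.sum_eq_single_of_mem a ha]
      intro b hb hba
      rw [prod_chordSq_apply_eq_zero_iff.2 (Finset.mem_erase.2 ⟨hba, hb⟩), smul_zero]
    have hreal := h q hq
    rw [hint μ hμ, hint ν hν] at hreal
    rw [← ofReal_measureReal, ← ofReal_measureReal, smul_left_injective ℝ hqa hreal]
  rw [Measure.ae_mem_finset_iff] at hμ hν
  rw [hμ, hν]
  exact Finset.sum_congr rfl fun a ha => by rw [hweight a ha]

theorem eq_of_integral_fourier_eq [Fact (0 < T)] {μ ν : Measure (AddCircle T)}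
    [IsFiniteMeasure μ] [IsFiniteMeasure ν] {S : Finset (AddCircle T)} {N : ℕ}
    (hS : S.card ≤ N) (hν : ∀ᵐ y ∂ν, y ∈ S)
    (h : ∀ k : ℤ, |k| ≤ N → ∫ y, fourier k y ∂μ = ∫ y, fourier k y ∂ν) : μ = ν :=
  have hpoly := fun f => integral_eq_of_mem_trigPolynomials h (f := f)
  eq_of_integral_trigPolynomials_eq (by omega) (ae_mem_of_integral_trigPolynomials_eq hS hν hpoly)
    hν hpoly

end AddCircle

theorem nonneg_sparse_measure_unique_tv_min_general [hT : Fact (0 < 2 * π)]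
    {s N : ℕ} (hsN : s ≤ N)
    (t : Fin s → AddCircle (2 * π)) (c : Fin s → ℝ)
    (hc : ∀ m, 0 < c m)
    (x : SignedMeasure (AddCircle (2 * π)))
    (hx : x = ∑ m : Fin s, c m • (Measure.dirac (t m)).toSignedMeasure) :
    ∀ x' : SignedMeasure (AddCircle (2 * π)),
      (∀ k : ℤ, |k| ≤ (N : ℤ) → csintegral x' (fourier k) = csintegral x (fourier k)) →
      (x.totalVariation Set.univ ≤ x'.totalVariation Set.univ ∧
        (x'.totalVariation Set.univ = x.totalVariation Set.univ → x' = x)) := by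
  classical
  intro x' hx'
  let μ : Measure (AddCircle (2 * π)) := ∑ m, (c m).toNNReal • Measure.dirac (t m)
  obtain rfl : x = μ.toSignedMeasure := by
    simp only [hx, μ, Measure.toSignedMeasure_finsetSum, Measure.toSignedMeasure_smul,
      NNReal.smul_def, Real.coe_toNNReal _ (hc _).le]
  have hμ : ∀ᵐ y ∂μ, y ∈ Finset.univ.image t :=
    ae_finsetSum_measure_iff.2 fun m _ => Measure.ae_smul_measure (by simp [ae_dirac_eq]) _
  have hmass : x' Set.univ = μ.toSignedMeasure Set.univ := by
    have h0 := hx' 0 (by simp)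
    rwa [show ⇑(fourier 0 : C(AddCircle (2 * π), ℂ)) = 1 from funext fun _ => fourier_zero,
      csintegral_one, csintegral_one, Complex.ofReal_inj] at h0
  have hTV : μ.toSignedMeasure.totalVariation Set.univ = ENNReal.ofReal (x' Set.univ) := by
    rw [hmass, Measure.totalVariation_toSignedMeasure,
      Measure.toSignedMeasure_apply_measurable MeasurableSet.univ, ofReal_measureReal]
  refine ⟨?_, fun hTV' => ?_⟩
  · calc _ = ENNReal.ofReal (x' Set.univ) := hTV
      _ ≤ ‖x' Set.univ‖ₑ := Real.ofReal_le_enorm _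
      _ ≤ _ := x'.enorm_le_totalVariation _
  · rw [x'.eq_toSignedMeasure_posPart_of_totalVariation_le (hTV' ▸ hTV.le)] at hx' ⊢
    congr 1
    refine AddCircle.eq_of_integral_fourier_eq (Finset.card_image_le.trans (by simpa using hsN))
      hμ fun k hk => ?_
    simpa only [csintegral_toSignedMeasure] using hx' k hk

/-- a non-negative Dirac ensemble on the circle `ℝ/2πℤ` with `s ≤ N` spikes is
the unique TV-minimizer among signed Borel measures matching its Fourier coefficients of
order `|k| ≤ N`. -/
theorem nonneg_sparse_measure_unique_tv_min [hT : Fact (0 < 2 * π)]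
    {s N : ℕ} (hsN : s ≤ N)
    (t : Fin s → AddCircle (2 * π)) (c : Fin s → ℝ)
    (ht : Function.Injective t) (hc : ∀ m, 0 < c m)
    (x : SignedMeasure (AddCircle (2 * π)))
    (hx : x = ∑ m : Fin s, c m • (Measure.dirac (t m)).toSignedMeasure) :
    ∀ x' : SignedMeasure (AddCircle (2 * π)),
      (∀ k : ℤ, |k| ≤ (N : ℤ) → csintegral x' (fourier k) = csintegral x (fourier k)) →
      (x.totalVariation Set.univ ≤ x'.totalVariation Set.univ ∧
        (x'.totalVariation Set.univ = x.totalVariation Set.univ → x' = x)) :=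
  nonneg_sparse_measure_unique_tv_min_general (hT := hT) hsN t c hc x hx
end
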